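/- arXiv:1102.3823 — 2 statements merged into one kernel-verified Lean document; each statement's English description precedes it below -/
import Mathlib

section
/- Let Ω ⊂ ℝⁿ be a pointed, solid, polyhedral cone, let E ⊂ F be faces of Ω with dim E = dim F − 1. Define Ω_E^⊛ = {x ∈ span(E^⊥ ∩ Ω*) : ⟨x, y⟩ ≥ 0 for all y ∈ E^⊥ ∩ Ω*}. Then (F^⊥ ∩ Ω*)^⊥ ∩ Ω_E^⊛ is an extreme ray of the cone Ω_E^⊛, and hence contains a unique unit vector e_F(E). Moreover e_F(E) ∈ E^⊥ ∩ span(F). -/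
open scoped RealInnerProductSpace

noncomputable section

abbrev Euc (n : ℕ) := EuclideanSpace ℝ (Fin n)

def IsConeSet {n : ℕ} (Ω : Set (Euc n)) : Prop :=
  ∀ x ∈ Ω, ∀ t : ℝ, 0 ≤ t → t • x ∈ Ω

def IsPointedSet {n : ℕ} (Ω : Set (Euc n)) : Prop :=
  ¬ ∃ (x v : Euc n), v ≠ 0 ∧ ∀ t : ℝ, x + t • v ∈ Ω

def IsSolidSet {n : ℕ} (Ω : Set (Euc n)) : Prop :=
  Submodule.span ℝ Ω = ⊤

def IsPolyhedralCone {n : ℕ} (Ω : Set (Euc n)) : Prop :=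
  ∃ s : Finset (Euc n),
    Ω = {x | ∃ c : Euc n → ℝ, (∀ v, 0 ≤ c v) ∧ x = ∑ v ∈ s, c v • v}

def DualConeSet {n : ℕ} (Ω : Set (Euc n)) : Set (Euc n) :=
  {y | ∀ x ∈ Ω, 0 ≤ ⟪x, y⟫}

def IsFaceOfCone {n : ℕ} (Ω F : Set (Euc n)) : Prop :=
  F ⊆ Ω ∧ Convex ℝ F ∧ IsConeSet F ∧ ∀ x ∈ Ω, ∀ y ∈ Ω, x + y ∈ F → x ∈ F ∧ y ∈ F

/-- The dual face `E^⊥ ∩ Ω*`. -/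
def DualFace {n : ℕ} (Ω F : Set (Euc n)) : Set (Euc n) :=
  {y ∈ DualConeSet Ω | ∀ x ∈ F, ⟪x, y⟫ = 0}

/-- `Ω_E^⊛ = {x ∈ span (E^⊥ ∩ Ω*) : ⟨x, y⟩ ≥ 0 for all y ∈ E^⊥ ∩ Ω*}`. -/
def CircledDual {n : ℕ} (Ω E : Set (Euc n)) : Set (Euc n) :=
  {x | x ∈ Submodule.span ℝ (DualFace Ω E) ∧ ∀ y ∈ DualFace Ω E, 0 ≤ ⟪x, y⟫}

/-- `R` is an extreme ray of the convex cone `C`. -/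
def IsExtremeRayOf {n : ℕ} (C R : Set (Euc n)) : Prop :=
  R ⊆ C ∧ (∃ v, v ≠ 0 ∧ R = {x | ∃ t : ℝ, 0 ≤ t ∧ x = t • v}) ∧
    ∀ x ∈ C, ∀ y ∈ C, x + y ∈ R → x ∈ R ∧ y ∈ R

/-!
The span of the dual face `E^⊥ ∩ Ω*` of a face `E` is all of `(span E)^⊥`: the cone
`Ω + span E` is finitely generated, hence closed (Carathéodory), so by Farkas' lemma a vector
annihilating `E^⊥ ∩ Ω*` lies in `Ω + span E`, and the face property then pushes it into `span E`.
Hence `span (F^⊥ ∩ Ω*)` has codimension one in `span (E^⊥ ∩ Ω*)`; let `L` be the orthogonal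
line between them. The dual face of `F` is a face of the dual face of `E`, so a nonzero `u ∈ L`
cannot change sign on `E^⊥ ∩ Ω*`: a positive combination of two points with opposite signs would
be orthogonal to `u`, hence lie in `span (F^⊥ ∩ Ω*)` and therefore in the smaller face, which is
orthogonal to `u`. With `u` oriented to be nonnegative there, the set in question is the ray
`ℝ₊ u`; it is extreme because it is cut out of `Ω_E^⊛` by the conditions `⟨·, y⟩ = 0` for
functionals `⟨·, y⟩` that are nonnegative on `Ω_E^⊛`.
-/

open Submodule

namespace PointedCone

section LinearOrderedField

variable {𝕜 M : Type*} [Field 𝕜] [LinearOrder 𝕜] [IsStrictOrderedRing 𝕜]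
  [AddCommGroup M] [Module 𝕜 M]

theorem mem_hull_finset_iff {s : Finset M} {x : M} :
    x ∈ hull 𝕜 (s : Set M) ↔ ∃ c : M → 𝕜, (∀ v, 0 ≤ c v) ∧ x = ∑ v ∈ s, c v • v := by
  refine ⟨fun hx => ?_, ?_⟩
  · obtain ⟨c, -, rfl⟩ := mem_span_finset.mp hx
    exact ⟨fun v => c v, fun v => (c v).2, rfl⟩
  · rintro ⟨c, hc, rfl⟩
    exact sum_mem fun v hv => (hull 𝕜 _).smul_mem (hc v) (subset_hull hv)

theorem exists_mem_hull_erase_of_not_linearIndepOn [DecidableEq M] {t : Finset M} {x : M}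
    (hdep : ¬ LinearIndepOn 𝕜 id (t : Set M)) (hx : x ∈ hull 𝕜 (t : Set M)) :
    ∃ v ∈ t, x ∈ hull 𝕜 (t.erase v : Set M) := by
  obtain ⟨c, hc, rfl⟩ := mem_hull_finset_iff.mp hx
  obtain ⟨g, hg, hpos⟩ : ∃ g : M → 𝕜, ∑ v ∈ t, g v • v = 0 ∧ ∃ v ∈ t, 0 < g v := by
    obtain ⟨g, hg, v, hv, hgv⟩ := not_linearIndepOn_finset_iff.mp hdep
    rcases hgv.lt_or_gt with hneg | hpos
    · exact ⟨-g, by simpa using hg, v, hv, by simpa using hneg⟩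
    · exact ⟨g, by simpa using hg, v, hv, hpos⟩
  -- Subtract from `c` the largest multiple `μ • g` keeping it nonnegative on `t`;
  -- it vanishes at the minimiser `v₀` of `c / g`.
  obtain ⟨v₀, hv₀, hmin⟩ := (t.filter (0 < g ·)).exists_min_image (fun v => c v / g v)
    (by simpa [Finset.filter_nonempty_iff] using hpos)
  rw [Finset.mem_filter] at hv₀
  set μ := c v₀ / g v₀
  have hμ : 0 ≤ μ := div_nonneg (hc v₀) hv₀.2.le
  have hsum : ∑ v ∈ t, c v • v = ∑ v ∈ t.erase v₀, (c v - μ * g v) • v := by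
    rw [Finset.sum_erase _ (by simp [μ, hv₀.2.ne']), ← sub_zero (∑ v ∈ t, c v • v),
      ← smul_zero μ, ← hg, Finset.smul_sum, ← Finset.sum_sub_distrib]
    simp only [sub_smul, mul_smul]
  refine ⟨v₀, hv₀.1, hsum ▸ sum_mem fun v hv => (hull 𝕜 _).smul_mem ?_ (subset_hull hv)⟩
  rcases lt_or_ge 0 (g v) with hgv | hgv
  · have := hmin v (Finset.mem_filter.mpr ⟨Finset.mem_of_mem_erase hv, hgv⟩)
    rw [le_div_iff₀ hgv] at this
    linarith
  · nlinarith [hc v]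

theorem exists_linearIndepOn_subset_mem_hull [DecidableEq M] (s : Finset M) {x : M}
    (hx : x ∈ hull 𝕜 (s : Set M)) :
    ∃ t ⊆ s, LinearIndepOn 𝕜 id (t : Set M) ∧ x ∈ hull 𝕜 (t : Set M) := by
  induction s using Finset.strongInduction with
  | H s ih =>
    by_cases hs : LinearIndepOn 𝕜 id (s : Set M)
    · exact ⟨s, subset_rfl, hs, hx⟩
    · obtain ⟨v, hv, hxv⟩ := exists_mem_hull_erase_of_not_linearIndepOn hs hx
      obtain ⟨t, hts, ht, hxt⟩ := ih _ (Finset.erase_ssubset hv) hxv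
      exact ⟨t, hts.trans (Finset.erase_subset v s), ht, hxt⟩

theorem hull_union_neg (T : Set M) : hull 𝕜 (T ∪ -T) = ofSubmodule (span 𝕜 T) := by
  refine le_antisymm (span_le.mpr (Set.union_subset Submodule.subset_span fun x hx => ?_))
    fun x hx => lineal_le _ ((span_le (R := 𝕜)).mpr (fun t ht => ?_) hx)
  · simpa using neg_mem (Submodule.subset_span (R := 𝕜) (Set.mem_neg.mp hx))
  · exact ⟨subset_hull (Or.inl ht), subset_hull (Or.inr (by simpa using ht))⟩

theorem fg_ofSubmodule {U : Submodule 𝕜 M} (hU : U.FG) :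
    (ofSubmodule U : PointedCone 𝕜 M).FG := by
  obtain ⟨T, rfl⟩ := hU
  rw [← hull_union_neg]
  exact fg_span (T.finite_toSet.union T.finite_toSet.neg)

theorem exists_sub_eq_of_mem_span {C : PointedCone 𝕜 M} {x : M}
    (hx : x ∈ span 𝕜 (C : Set M)) : ∃ a ∈ C, ∃ b ∈ C, a - b = x := by
  induction hx using span_induction with
  | mem x hx => exact ⟨x, hx, 0, C.zero_mem, sub_zero x⟩
  | zero => exact ⟨0, C.zero_mem, 0, C.zero_mem, sub_zero 0⟩
  | add x y _ _ hx hy =>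
    obtain ⟨a, ha, b, hb, rfl⟩ := hx
    obtain ⟨a', ha', b', hb', rfl⟩ := hy
    exact ⟨a + a', C.add_mem ha ha', b + b', C.add_mem hb hb', add_sub_add_comm ..⟩
  | smul t x _ hx =>
    obtain ⟨a, ha, b, hb, rfl⟩ := hx
    rcases le_total 0 t with ht | ht
    · exact ⟨t • a, C.smul_mem ht ha, t • b, C.smul_mem ht hb, (smul_sub t a b).symm⟩
    · refine ⟨(-t) • b, C.smul_mem (neg_nonneg.mpr ht) hb,
        (-t) • a, C.smul_mem (neg_nonneg.mpr ht) ha, ?_⟩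
      rw [neg_smul, neg_smul, neg_sub_neg, smul_sub]

theorem IsFaceOf.mem_of_add_mem_span {C F : PointedCone 𝕜 M} (hF : F.IsFaceOf C) {x y : M}
    (hx : x ∈ C) (hy : y ∈ C) (hxy : x + y ∈ span 𝕜 (F : Set M)) : x ∈ F := by
  obtain ⟨f, hf, f', hf', hff'⟩ := exists_sub_eq_of_mem_span hxy
  refine hF.mem_of_add_mem_left hx (C.add_mem hy (hF.le hf')) ?_
  rwa [← add_assoc, ← hff', sub_add_cancel]

end LinearOrderedField

section Real

variable {E : Type*} [NormedAddCommGroup E] [NormedSpace ℝ E]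

theorem isClosed_hull_of_linearIndepOn {t : Finset E} (ht : LinearIndepOn ℝ id (t : Set E)) :
    IsClosed (hull ℝ (t : Set E) : Set E) := by
  let L := Fintype.linearCombination ℝ (Subtype.val : t → E)
  have hL : LinearMap.ker L = ⊥ := LinearMap.ker_eq_bot.mpr
    (linearIndependent_iff_injective_fintypeLinearCombination.mp ht)
  have himage : (hull ℝ (t : Set E) : Set E) = L '' Set.Ici 0 := by
    ext x
    refine ⟨fun hx => ?_, ?_⟩
    · obtain ⟨c, rfl⟩ := mem_span_finset'.mp hx
      exact ⟨fun v => c v, fun v => (c v).2, by simp [L, Fintype.linearCombination_apply]⟩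
    · rintro ⟨c, hc, rfl⟩
      rw [SetLike.mem_coe, Fintype.linearCombination_apply]
      exact sum_mem fun v _ => (hull ℝ _).smul_mem (hc v) (subset_hull v.2)
  rw [himage]
  exact (L.isClosedEmbedding_of_injective hL).isClosedMap _ isClosed_Ici

theorem isClosed_of_fg {C : PointedCone ℝ E} (hC : C.FG) : IsClosed (C : Set E) := by
  classical
  obtain ⟨s, rfl⟩ := hC
  set S := s.powerset.filter fun t : Finset E => LinearIndepOn ℝ id (t : Set E)
  have hunion :
      (hull ℝ (s : Set E) : Set E) = ⋃ t ∈ S, (hull ℝ ((t : Finset E) : Set E) : Set E) := by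
    ext x
    simp only [S, Set.mem_iUnion, Finset.mem_filter, Finset.mem_powerset, exists_prop]
    refine ⟨fun hx => ?_, fun ⟨t, ⟨hts, _⟩, hx⟩ => span_mono (Finset.coe_subset.mpr hts) hx⟩
    obtain ⟨t, hts, ht, hxt⟩ := exists_linearIndepOn_subset_mem_hull s hx
    exact ⟨t, ⟨hts, ht⟩, hxt⟩
  rw [hunion]
  exact isClosed_biUnion_finset fun t ht =>
    isClosed_hull_of_linearIndepOn (Finset.mem_filter.mp ht).2

end Real

end PointedCone

theorem existsUnique_norm_eq_one_of_mem_ray {V : Type*} [NormedAddCommGroup V] [NormedSpace ℝ V]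
    {v : V} (hv : v ≠ 0) :
    ∃! e : V, e ∈ {x | ∃ t : ℝ, 0 ≤ t ∧ x = t • v} ∧ ‖e‖ = 1 := by
  have hv' : 0 < ‖v‖ := norm_pos_iff.mpr hv
  refine ⟨‖v‖⁻¹ • v, ⟨⟨_, inv_nonneg.mpr hv'.le, rfl⟩, ?_⟩, ?_⟩
  · rw [norm_smul, norm_inv, norm_norm, inv_mul_cancel₀ hv'.ne']
  · rintro _ ⟨⟨t, ht, rfl⟩, h⟩
    rw [norm_smul, Real.norm_of_nonneg ht] at h
    rw [eq_inv_of_mul_eq_one_left h]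

section InnerProductSpace

variable {V : Type*} [NormedAddCommGroup V] [InnerProductSpace ℝ V]

theorem Submodule.mem_orthogonal_span_iff {S : Set V} {x : V} :
    x ∈ (span ℝ S)ᗮ ↔ ∀ y ∈ S, ⟪y, x⟫ = 0 := by
  refine ⟨fun hx y hy => (mem_orthogonal _ _).mp hx y (subset_span hy), fun h => ?_⟩
  rw [mem_orthogonal]
  intro u hu
  have hle : span ℝ S ≤ (ℝ ∙ x)ᗮ :=
    span_le.mpr fun y hy => mem_orthogonal_singleton_iff_inner_left.mpr (h y hy)
  rw [real_inner_comm]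
  exact mem_orthogonal_singleton_iff_inner_right.mp (hle hu)

theorem Submodule.mem_of_inner_eq_zero_of_orthogonal_inf_eq_span [FiniteDimensional ℝ V]
    {W U : Submodule ℝ V} {u z : V} (hWU : W ≤ U) (hu : Wᗮ ⊓ U = ℝ ∙ u) (hz : z ∈ U)
    (huz : ⟪u, z⟫ = 0) : z ∈ W := by
  rw [← sup_orthogonal_inf_of_hasOrthogonalProjection hWU, hu] at hz
  obtain ⟨w, hw, l, hl, rfl⟩ := mem_sup.mp hz
  obtain ⟨t, rfl⟩ := mem_span_singleton.mp hl
  have huW : u ∈ Wᗮ := (hu ▸ mem_span_singleton_self u : u ∈ Wᗮ ⊓ U).1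
  rw [inner_add_right, (mem_orthogonal' _ _).mp huW w hw, zero_add, real_inner_smul_right,
    mul_eq_zero, inner_self_eq_zero] at huz
  rcases huz with rfl | rfl <;> simpa

theorem PointedCone.IsFaceOf.inner_nonneg_or_inner_nonpos [FiniteDimensional ℝ V]
    {D K : PointedCone ℝ V} (hK : K.IsFaceOf D) {u : V}
    (hu : (span ℝ (K : Set V))ᗮ ⊓ span ℝ (D : Set V) = ℝ ∙ u) :
    (∀ y ∈ D, 0 ≤ ⟪u, y⟫) ∨ ∀ y ∈ D, ⟪u, y⟫ ≤ 0 := by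
  by_contra! h
  obtain ⟨⟨y, hy, hneg⟩, ⟨y', hy', hpos⟩⟩ := h
  have hy'K : (-⟪u, y⟫) • y' ∈ K := by
    have hw₁ : ⟪u, y'⟫ • y ∈ D := D.smul_mem hpos.le hy
    have hw₂ : (-⟪u, y⟫) • y' ∈ D := D.smul_mem (by linarith) hy'
    refine hK.mem_of_add_mem_span hw₂ hw₁ (mem_of_inner_eq_zero_of_orthogonal_inf_eq_span
      (span_mono hK.le) hu (Submodule.subset_span (D.add_mem hw₂ hw₁)) ?_)
    rw [inner_add_right, real_inner_smul_right, real_inner_smul_right]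
    ring
  have huK : u ∈ (span ℝ (K : Set V))ᗮ ⊓ span ℝ (D : Set V) := hu ▸ mem_span_singleton_self u
  have := (mem_orthogonal' _ _).mp huK.1 _ (Submodule.subset_span hy'K)
  rw [real_inner_smul_right] at this
  nlinarith

open Module in
theorem PointedCone.IsFaceOf.exists_ray_eq [FiniteDimensional ℝ V] {D K : PointedCone ℝ V}
    (hK : K.IsFaceOf D)
    (hrank : finrank ℝ (span ℝ (K : Set V)) + 1 = finrank ℝ (span ℝ (D : Set V))) :
    ∃ v ≠ 0, {x | ∀ y ∈ K, ⟪x, y⟫ = 0} ∩ {x | x ∈ span ℝ (D : Set V) ∧ ∀ y ∈ D, 0 ≤ ⟪x, y⟫}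
      = {x | ∃ t : ℝ, 0 ≤ t ∧ x = t • v} := by
  set L := (span ℝ (K : Set V))ᗮ ⊓ span ℝ (D : Set V)
  have hL : finrank ℝ L = 1 := finrank_add_inf_finrank_orthogonal' (span_mono hK.le) hrank
  obtain ⟨u, huL, hu0⟩ := exists_mem_ne_zero_of_ne_bot (isAtom_iff_finrank_eq_one.mpr hL).ne_bot
  obtain ⟨v, hvL, hv0, hvD⟩ : ∃ v ∈ L, v ≠ 0 ∧ ∀ y ∈ D, 0 ≤ ⟪v, y⟫ := by
    rcases hK.inner_nonneg_or_inner_nonpos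
        (eq_span_singleton_of_mem_of_finrank_eq_one hL huL hu0) with h | h
    · exact ⟨u, huL, hu0, h⟩
    · refine ⟨-u, neg_mem huL, neg_ne_zero.mpr hu0, fun y hy => ?_⟩
      rw [inner_neg_left]
      linarith [h y hy]
  have hLv := eq_span_singleton_of_mem_of_finrank_eq_one hL hvL hv0
  obtain ⟨y₀, hy₀, hvy₀⟩ : ∃ y₀ ∈ D, 0 < ⟪v, y₀⟫ := by
    by_contra! h
    have hvD' : v ∈ (span ℝ (D : Set V))ᗮ := mem_orthogonal_span_iff.mpr fun y hy => by
      rw [real_inner_comm]; exact le_antisymm (h y hy) (hvD y hy)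
    have hv : v ∈ span ℝ (D : Set V) ⊓ (span ℝ (D : Set V))ᗮ := ⟨hvL.2, hvD'⟩
    rw [inf_orthogonal_eq_bot, mem_bot] at hv
    exact hv0 hv
  refine ⟨v, hv0, Set.ext fun x => ⟨fun ⟨hxK, hxD, hxpos⟩ => ?_, ?_⟩⟩
  · have hxL : x ∈ L := ⟨mem_orthogonal_span_iff.mpr fun y hy => by
      rw [real_inner_comm]; exact hxK y hy, hxD⟩
    obtain ⟨t, rfl⟩ := mem_span_singleton.mp (hLv ▸ hxL)
    have := hxpos y₀ hy₀
    rw [real_inner_smul_left] at this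
    exact ⟨t, nonneg_of_mul_nonneg_left this hvy₀, rfl⟩
  · rintro ⟨t, ht, rfl⟩
    refine ⟨fun y hy => ?_, (span ℝ (D : Set V)).smul_mem t hvL.2, fun y hy => ?_⟩
    · rw [real_inner_smul_left, real_inner_comm, mem_orthogonal_span_iff.mp hvL.1 y hy, mul_zero]
    · rw [real_inner_smul_left]
      exact mul_nonneg ht (hvD y hy)

end InnerProductSpace

section ConeFaces

variable {n : ℕ}

open PointedCone Submodule

theorem IsPolyhedralCone.exists_fg {Ω : Set (Euc n)} (hΩ : IsPolyhedralCone Ω) :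
    ∃ C : PointedCone ℝ (Euc n), C.FG ∧ Ω = C := by
  obtain ⟨s, rfl⟩ := hΩ
  exact ⟨hull ℝ (s : Set (Euc n)), ⟨s, rfl⟩, Set.ext fun x => mem_hull_finset_iff.symm⟩

theorem lineal_eq_bot_of_isPointedSet {C : PointedCone ℝ (Euc n)}
    (hC : IsPointedSet (C : Set (Euc n))) : C.lineal = ⊥ := by
  refine (Submodule.eq_bot_iff _).mpr fun x ⟨hx, hnx⟩ =>
    by_contra fun hx0 => hC ⟨0, x, hx0, fun t => ?_⟩
  rcases le_total 0 t with ht | ht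
  · simpa using C.smul_mem ht hx
  · simpa using C.smul_mem (neg_nonneg.mpr ht) hnx

def IsFaceOfCone.toPointedCone {Ω G : Set (Euc n)} (hG : IsFaceOfCone Ω G)
    (hne : G.Nonempty) : PointedCone ℝ (Euc n) where
  carrier := G
  add_mem' {x y} hx hy := by
    have := hG.2.2.1 _ (hG.2.1 hx hy (by norm_num : (0 : ℝ) ≤ 1 / 2)
      (by norm_num : (0 : ℝ) ≤ 1 / 2) (by norm_num)) 2 (by norm_num)
    simpa [smul_add, smul_smul] using this
  zero_mem' := by
    obtain ⟨g, hg⟩ := hne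
    simpa using hG.2.2.1 g hg 0 le_rfl
  smul_mem' c x hx := hG.2.2.1 x hx c c.2

theorem IsFaceOfCone.isFaceOf_toPointedCone {C : PointedCone ℝ (Euc n)} {G : Set (Euc n)}
    (hG : IsFaceOfCone C G) (hne : G.Nonempty) : (hG.toPointedCone hne).IsFaceOf C :=
  .of_mem_of_add_mem_left (fun _ hx => hG.1 hx) fun hx hy hxy => (hG.2.2.2 _ hx _ hy hxy).1

theorem IsFaceOfCone.mem_span_of_add_mem_span {C : PointedCone ℝ (Euc n)}
    {G : Set (Euc n)} (hC : C.lineal = ⊥) (hG : IsFaceOfCone C G) {a b : Euc n} (ha : a ∈ C)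
    (hb : b ∈ C) (hab : a + b ∈ span ℝ G) : a ∈ span ℝ G := by
  rcases G.eq_empty_or_nonempty with rfl | hne
  · rw [span_empty, mem_bot] at hab ⊢
    have : a ∈ C.lineal := mem_lineal.mpr ⟨ha, by rwa [neg_eq_of_add_eq_zero_right hab]⟩
    rwa [hC, mem_bot] at this
  · exact subset_span ((hG.isFaceOf_toPointedCone hne).mem_of_add_mem_span ha hb hab)

def dualFaceCone (Ω G : Set (Euc n)) : PointedCone ℝ (Euc n) where
  carrier := DualFace Ω G
  add_mem' {x y} hx hy :=
    ⟨fun z hz => by rw [inner_add_right]; exact add_nonneg (hx.1 z hz) (hy.1 z hz),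
      fun z hz => by rw [inner_add_right, hx.2 z hz, hy.2 z hz, add_zero]⟩
  zero_mem' := ⟨fun z _ => by simp, fun z _ => by simp⟩
  smul_mem' c x hx :=
    ⟨fun z hz => by rw [← Nonneg.coe_smul, real_inner_smul_right]; exact mul_nonneg c.2 (hx.1 z hz),
      fun z hz => by rw [← Nonneg.coe_smul, real_inner_smul_right, hx.2 z hz, mul_zero]⟩

theorem isFaceOf_dualFaceCone {Ω E F : Set (Euc n)} (hFΩ : F ⊆ Ω) (hEF : E ⊆ F) :
    (dualFaceCone Ω F).IsFaceOf (dualFaceCone Ω E) := by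
  refine .of_mem_of_add_mem_left (fun y hy => ⟨hy.1, fun x hx => hy.2 x (hEF hx)⟩) ?_
  intro y y' hy hy' hyy'
  refine ⟨hy.1, fun x hx => le_antisymm ?_ (hy.1 x (hFΩ hx))⟩
  have := hyy'.2 x hx
  rw [inner_add_right] at this
  linarith [hy'.1 x (hFΩ hx)]

theorem span_dualFace_eq_orthogonal {C : PointedCone ℝ (Euc n)} (hC : C.FG) {G : Set (Euc n)}
    (hG : ∀ a ∈ C, ∀ b ∈ C, a + b ∈ span ℝ G → a ∈ span ℝ G) :
    span ℝ (DualFace C G) = (span ℝ G)ᗮ := by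
  refine le_antisymm (span_le.mpr fun y hy => mem_orthogonal_span_iff.mpr hy.2) ?_
  rw [← orthogonal_orthogonal (span ℝ (DualFace C G))]
  refine orthogonal_le fun w hw => ?_
  -- `M` is closed and its dual cone is `DualFace C G`, so by Farkas' lemma it contains the
  -- annihilator of `DualFace C G`.
  set M : PointedCone ℝ (Euc n) := C ⊔ ofSubmodule (span ℝ G)
  have hM : IsClosed (M : Set (Euc n)) :=
    isClosed_of_fg (hC.sup (fg_ofSubmodule (IsNoetherian.noetherian _)))
  have hMdual : ∀ y : Euc n, (∀ z ∈ M, 0 ≤ ⟪z, y⟫) → y ∈ DualFace C G := by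
    refine fun y hy => ⟨fun x hx => hy x (le_sup_left (a := C) hx), fun x hx => le_antisymm ?_
      (hy x (le_sup_right (a := C) (subset_span hx)))⟩
    have := hy (-x) (le_sup_right (a := C) (mem_ofSubmodule_iff.mpr (neg_mem (subset_span hx))))
    rwa [inner_neg_left, neg_nonneg] at this
  have hwM : ∀ w ∈ (span ℝ (DualFace C G))ᗮ, w ∈ M := fun w hw => by
    by_contra hwM
    obtain ⟨y, hy, hwy⟩ := ProperCone.hyperplane_separation' ⟨M, hM⟩ hwM
    rw [real_inner_comm, mem_orthogonal_span_iff.mp hw y (hMdual y hy)] at hwy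
    exact hwy.false
  obtain ⟨a, ha, u, hu, rfl⟩ := mem_sup.mp (hwM w hw)
  obtain ⟨a', ha', u', hu', h'⟩ := mem_sup.mp (hwM _ (neg_mem hw))
  have haa' : a + a' = -(u + u') := by linear_combination (norm := module) h'
  exact add_mem (hG a ha a' ha' (haa' ▸ neg_mem (add_mem hu hu'))) hu

theorem isExtremeRayOf_annihilator_inter {C K : Set (Euc n)}
    (hCK : ∀ x ∈ C, ∀ y ∈ K, 0 ≤ ⟪x, y⟫) {v : Euc n} (hv : v ≠ 0)
    (hray : {x | ∀ y ∈ K, ⟪x, y⟫ = 0} ∩ C = {x | ∃ t : ℝ, 0 ≤ t ∧ x = t • v}) :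
    IsExtremeRayOf C ({x | ∀ y ∈ K, ⟪x, y⟫ = 0} ∩ C) := by
  refine ⟨Set.inter_subset_right, ⟨v, hv, hray⟩, fun x hx y hy hxy => ?_⟩
  have h : ∀ z ∈ K, ⟪x, z⟫ = 0 ∧ ⟪y, z⟫ = 0 := fun z hz => by
    have := hxy.1 z hz
    rw [inner_add_left] at this
    constructor <;> linarith [hCK x hx z hz, hCK y hy z hz]
  exact ⟨⟨fun z hz => (h z hz).1, hx⟩, ⟨fun z hz => (h z hz).2, hy⟩⟩

end ConeFaces

theorem extreme_ray_unit_vector_general {n : ℕ} (Ω E F : Set (Euc n))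
    (hpointed : IsPointedSet Ω) (hpoly : IsPolyhedralCone Ω)
    (hE : IsFaceOfCone Ω E) (hF : IsFaceOfCone Ω F) (hEF : E ⊆ F)
    (hdim : Module.finrank ℝ (Submodule.span ℝ F)
      = Module.finrank ℝ (Submodule.span ℝ E) + 1) :
    IsExtremeRayOf (CircledDual Ω E)
      ({x | ∀ y ∈ DualFace Ω F, ⟪x, y⟫ = 0} ∩ CircledDual Ω E) ∧
    (∃! e : Euc n,
      e ∈ {x | ∀ y ∈ DualFace Ω F, ⟪x, y⟫ = 0} ∩ CircledDual Ω E ∧ ‖e‖ = 1) ∧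
    (∀ e : Euc n,
      e ∈ {x | ∀ y ∈ DualFace Ω F, ⟪x, y⟫ = 0} ∩ CircledDual Ω E → ‖e‖ = 1 →
      (∀ x ∈ E, ⟪x, e⟫ = 0) ∧ e ∈ Submodule.span ℝ F) := by
  obtain ⟨C, hC, rfl⟩ := hpoly.exists_fg
  have hlineal := lineal_eq_bot_of_isPointedSet hpointed
  have hDE := span_dualFace_eq_orthogonal hC fun a ha b hb =>
    hE.mem_span_of_add_mem_span hlineal ha hb
  have hDF := span_dualFace_eq_orthogonal hC fun a ha b hb =>
    hF.mem_span_of_add_mem_span hlineal ha hb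
  have hrank : Module.finrank ℝ (span ℝ (DualFace C F)) + 1
      = Module.finrank ℝ (span ℝ (DualFace C E)) := by
    have := (span ℝ E).finrank_add_finrank_orthogonal
    have := (span ℝ F).finrank_add_finrank_orthogonal
    rw [hDE, hDF]
    omega
  obtain ⟨v, hv, hray⟩ := (isFaceOf_dualFaceCone hF.1 hEF).exists_ray_eq hrank
  replace hray : {x | ∀ y ∈ DualFace C F, ⟪x, y⟫ = 0} ∩ CircledDual C E
      = {x | ∃ t : ℝ, 0 ≤ t ∧ x = t • v} := hray
  have hDFE : DualFace C F ⊆ DualFace C E := fun y hy => ⟨hy.1, fun z hz => hy.2 z (hEF hz)⟩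
  refine ⟨isExtremeRayOf_annihilator_inter (fun x hx y hy => hx.2 y (hDFE hy)) hv hray,
    hray ▸ existsUnique_norm_eq_one_of_mem_ray hv, fun e ⟨heF, heE, _⟩ _ => ⟨?_, ?_⟩⟩
  · exact mem_orthogonal_span_iff.mp (hDE ▸ heE)
  · rw [← orthogonal_orthogonal (span ℝ F), ← hDF, mem_orthogonal_span_iff]
    exact fun y hy => real_inner_comm e y ▸ heF y hy

/-- for faces `E ⊂ F` of a pointed solid polyhedral cone `Ω` with
`dim E = dim F − 1`, the set `(F^⊥ ∩ Ω*)^⊥ ∩ Ω_E^⊛` is an extreme ray of `Ω_E^⊛`;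
it contains a unique unit vector `e_F(E)`, which lies in `E^⊥ ∩ span F`. -/
theorem extreme_ray_unit_vector {n : ℕ} (Ω E F : Set (Euc n))
    (hconv : Convex ℝ Ω) (hcone : IsConeSet Ω) (hclosed : IsClosed Ω)
    (hpointed : IsPointedSet Ω) (hsolid : IsSolidSet Ω) (hpoly : IsPolyhedralCone Ω)
    (hE : IsFaceOfCone Ω E) (hF : IsFaceOfCone Ω F) (hEF : E ⊆ F)
    (hdim : Module.finrank ℝ (Submodule.span ℝ F)
      = Module.finrank ℝ (Submodule.span ℝ E) + 1) :
    IsExtremeRayOf (CircledDual Ω E)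
      ({x | ∀ y ∈ DualFace Ω F, ⟪x, y⟫ = 0} ∩ CircledDual Ω E) ∧
    (∃! e : Euc n,
      e ∈ {x | ∀ y ∈ DualFace Ω F, ⟪x, y⟫ = 0} ∩ CircledDual Ω E ∧ ‖e‖ = 1) ∧
    (∀ e : Euc n,
      e ∈ {x | ∀ y ∈ DualFace Ω F, ⟪x, y⟫ = 0} ∩ CircledDual Ω E → ‖e‖ = 1 →
      (∀ x ∈ E, ⟪x, e⟫ = 0) ∧ e ∈ Submodule.span ℝ F) :=
  extreme_ray_unit_vector_general Ω E F hpointed hpoly hE hF hEF hdim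
end
end

section
/- Let (f_r)_{r∈[0,1]} be the family of self-maps of S^{j−1} ⊂ ℝ^{j−1} × ℝ given by f_r(x, s) = normalize(u_r·x, min(1, −1 + 2(s+1)/(r+1))) where u_r ≥ 0 is chosen so that the image lies on the sphere. Then each f_r is a well-defined continuous map S^{j−1} → S^{j−1} of degree 1, mapping every point of height s ≥ r to the north pole (0, …, 0, 1), and (r, x) ↦ f_r(x) is jointly continuous. -/
/-!
With `e` the north pole, `f_r` keeps the direction of the horizontal part `x = y - ⟪e, y⟫ e`
of `y` and replaces its height `s` by `t = pushedHeight r s`. As `x ⊥ e` and `‖x‖² = 1 - s²`,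
rescaling `x` by `√((1 - t²) / (1 - s²))` puts the image on the sphere. Since `s ≤ t` and
`1 + t ≤ 2 (1 + s)`, this scale is at most `√2`, which gives continuity at the poles, where `x`
vanishes. For `r = 1` the height is unchanged, so `f_1 = id`, and the jointly continuous family
`r ↦ f_r` is itself a homotopy from `f_r` to the identity.
-/

noncomputable section

open Set Metric Filter Topology
open scoped RealInnerProductSpace

theorem ContinuousMap.homotopic_of_continuous_uncurry {P X Y : Type*} [TopologicalSpace P]
    [PathConnectedSpace P] [TopologicalSpace X] [TopologicalSpace Y] (F : P → C(X, Y))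
    (hF : Continuous fun p : P × X => F p.1 p.2) (a b : P) : (F a).Homotopic (F b) :=
  let γ := (PathConnectedSpace.joined a b).somePath
  ⟨{ toFun := fun p => F (γ p.1) p.2
     continuous_toFun := hF.comp ((γ.continuous.comp continuous_fst).prodMk continuous_snd)
     map_zero_left := by simp
     map_one_left := by simp }⟩

theorem continuous_smul_of_continuousAt_of_norm_le {X 𝕜 E : Type*} [TopologicalSpace X]
    [NormedField 𝕜] [NormedAddCommGroup E] [NormedSpace 𝕜 E] {f : X → 𝕜} {g : X → E}
    (hg : Continuous g) (hf : ∀ x, g x ≠ 0 → ContinuousAt f x) {C : ℝ} (hC : ∀ x, ‖f x‖ ≤ C) :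
    Continuous fun x => f x • g x := by
  refine continuous_iff_continuousAt.2 fun x => ?_
  by_cases hx : g x = 0
  · have hbdd : IsBoundedUnder (· ≤ ·) (𝓝 x) (norm ∘ f) := isBoundedUnder_of ⟨C, hC⟩
    have := hbdd.smul_tendsto_zero (hx ▸ hg.tendsto x)
    simpa [ContinuousAt, hx] using this
  · exact (hf x hx).smul hg.continuousAt

def pushedHeight (r s : ℝ) : ℝ := min 1 (-1 + 2 * (s + 1) / (r + 1))

/-- At the poles `1 - s ^ 2 = 0` and the scale is `0`; the horizontal part vanishes there. -/
def horizontalScale (r s : ℝ) : ℝ := √((1 - pushedHeight r s ^ 2) / (1 - s ^ 2))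

section pushedHeight

variable {r s : ℝ}

theorem pushedHeight_le_one : pushedHeight r s ≤ 1 := min_le_left _ _

theorem le_pushedHeight (hr₀ : 0 ≤ r) (hr₁ : r ≤ 1) (hs₀ : -1 ≤ s) (hs₁ : s ≤ 1) :
    s ≤ pushedHeight r s := by
  refine le_min hs₁ ?_
  have : s + 1 ≤ 2 * (s + 1) / (r + 1) := by
    rw [le_div_iff₀ (by linarith)]; nlinarith
  linarith

theorem pushedHeight_of_le (hr : 0 ≤ r) (hrs : r ≤ s) : pushedHeight r s = 1 :=
  min_eq_left <| by
    have : 2 ≤ 2 * (s + 1) / (r + 1) := by rw [le_div_iff₀ (by linarith)]; linarith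
    linarith

theorem pushedHeight_one_left (hs : s ≤ 1) : pushedHeight 1 s = s := by
  simp only [pushedHeight]
  rw [min_eq_right] <;> linarith

theorem pushedHeight_neg_one : pushedHeight r (-1) = -1 := by
  norm_num [pushedHeight]

theorem horizontalScale_sq_mul (hr₀ : 0 ≤ r) (hr₁ : r ≤ 1) (hs : |s| ≤ 1) :
    horizontalScale r s ^ 2 * (1 - s ^ 2) = 1 - pushedHeight r s ^ 2 := by
  obtain ⟨hs₀, hs₁⟩ := abs_le.1 hs
  rcases (sq_le_one_iff_abs_le_one s).2 hs |>.eq_or_lt with hs2 | hs2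
  · rcases sq_eq_one_iff.1 hs2 with rfl | rfl
    · simp [pushedHeight_of_le hr₀ hr₁]
    · simp [pushedHeight_neg_one]
  have := le_pushedHeight hr₀ hr₁ hs₀ hs₁
  have := pushedHeight_le_one (r := r) (s := s)
  rw [horizontalScale, Real.sq_sqrt (div_nonneg (by nlinarith) (by linarith)),
    div_mul_cancel₀ _ (by linarith)]

theorem horizontalScale_le (hr₀ : 0 ≤ r) (hr₁ : r ≤ 1) (hs : |s| ≤ 1) :
    horizontalScale r s ≤ √2 := by
  obtain ⟨hs₀, hs₁⟩ := abs_le.1 hs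
  refine Real.sqrt_le_sqrt ?_
  rcases (sq_le_one_iff_abs_le_one s).2 hs |>.eq_or_lt with hs2 | hs2
  · simp [hs2]
  have ht₀ := le_pushedHeight hr₀ hr₁ hs₀ hs₁
  have ht₁ : 1 + pushedHeight r s ≤ 2 * (1 + s) := by
    have h1 : 2 * (s + 1) / (r + 1) ≤ 2 * (s + 1) :=
      div_le_self (by linarith) (by linarith)
    linarith [show pushedHeight r s ≤ -1 + 2 * (s + 1) / (r + 1) from min_le_right _ _]
  rw [div_le_iff₀ (by linarith)]
  nlinarith [pushedHeight_le_one (r := r) (s := s)]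

theorem horizontalScale_nonneg : 0 ≤ horizontalScale r s := Real.sqrt_nonneg _

theorem horizontalScale_of_le (hr : 0 ≤ r) (hrs : r ≤ s) : horizontalScale r s = 0 := by
  simp [horizontalScale, pushedHeight_of_le hr hrs]

theorem horizontalScale_one_left (hs : |s| < 1) : horizontalScale 1 s = 1 := by
  have : 1 - s ^ 2 ≠ 0 := by nlinarith [abs_lt.1 hs, sq_abs s]
  simp [horizontalScale, pushedHeight_one_left (abs_lt.1 hs).2.le, div_self this]

end pushedHeight

section heightPush

variable {E : Type*} [NormedAddCommGroup E] [InnerProductSpace ℝ E] {e y : E}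

def heightPush (e : E) (r : ℝ) (y : E) : E :=
  horizontalScale r ⟪e, y⟫ • (y - ⟪e, y⟫ • e) + pushedHeight r ⟪e, y⟫ • e

theorem inner_sub_inner_smul_self (he : ‖e‖ = 1) (y : E) : ⟪e, y - ⟪e, y⟫ • e⟫ = 0 := by
  simp [inner_sub_right, inner_smul_right, he]

theorem norm_sub_inner_smul_sq (he : ‖e‖ = 1) (y : E) :
    ‖y - ⟪e, y⟫ • e‖ ^ 2 = ‖y‖ ^ 2 - ⟪e, y⟫ ^ 2 := by
  rw [norm_sub_sq_real, real_inner_smul_right, norm_smul, he, Real.norm_eq_abs, mul_one, sq_abs,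
    real_inner_comm]
  ring

theorem abs_inner_le_one (he : ‖e‖ = 1) (hy : ‖y‖ = 1) : |⟪e, y⟫| ≤ 1 := by
  simpa [he, hy] using abs_real_inner_le_norm e y

theorem sub_inner_smul_eq_zero (he : ‖e‖ = 1) (hy : ‖y‖ = 1) (hs : ⟪e, y⟫ ^ 2 = 1) :
    y - ⟪e, y⟫ • e = 0 := by
  rw [← norm_eq_zero, ← sq_eq_zero_iff, norm_sub_inner_smul_sq he, hy, hs, one_pow, sub_self]

theorem inner_heightPush (he : ‖e‖ = 1) (r : ℝ) (y : E) :
    ⟪e, heightPush e r y⟫ = pushedHeight r ⟪e, y⟫ := by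
  simp [heightPush, inner_add_right, inner_smul_right, inner_sub_inner_smul_self he, he]

theorem heightPush_of_le {r : ℝ} (hr : 0 ≤ r) (hrs : r ≤ ⟪e, y⟫) :
    heightPush e r y = e := by
  simp [heightPush, horizontalScale_of_le hr hrs, pushedHeight_of_le hr hrs]

theorem heightPush_one_left (he : ‖e‖ = 1) (hy : ‖y‖ = 1) : heightPush e 1 y = y := by
  rcases (abs_inner_le_one he hy).eq_or_lt with hs | hs
  · have hy' := sub_inner_smul_eq_zero he hy (by rw [← sq_abs, hs, one_pow])
    rw [heightPush, hy', smul_zero, zero_add, pushedHeight_one_left (abs_le.1 hs.le).2,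
      (sub_eq_zero.1 hy').symm]
  · simp [heightPush, horizontalScale_one_left hs, pushedHeight_one_left (abs_lt.1 hs).2.le]

theorem norm_heightPush {r : ℝ} (hr₀ : 0 ≤ r) (hr₁ : r ≤ 1) (he : ‖e‖ = 1) (hy : ‖y‖ = 1) :
    ‖heightPush e r y‖ = 1 := by
  have horth : ⟪horizontalScale r ⟪e, y⟫ • (y - ⟪e, y⟫ • e), pushedHeight r ⟪e, y⟫ • e⟫ = 0 := by
    rw [real_inner_smul_left, real_inner_smul_right, real_inner_comm e,
      inner_sub_inner_smul_self he, mul_zero, mul_zero]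
  have hsq : ‖heightPush e r y‖ ^ 2 = 1 := by
    rw [sq, heightPush, norm_add_sq_eq_norm_sq_add_norm_sq_real horth, ← sq, ← sq, norm_smul,
      norm_smul, he, mul_one, mul_pow, norm_sub_inner_smul_sq he, hy, Real.norm_eq_abs, sq_abs,
      Real.norm_eq_abs, sq_abs, one_pow, horizontalScale_sq_mul hr₀ hr₁ (abs_inner_le_one he hy)]
    ring
  exact (pow_eq_one_iff_of_nonneg (norm_nonneg _) two_ne_zero).1 hsq

end heightPush

section continuity

variable {X : Type*} [TopologicalSpace X] {f g : X → ℝ} {x : X}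

theorem ContinuousAt.pushedHeight (hf : ContinuousAt f x) (hg : ContinuousAt g x)
    (hx : f x ≠ -1) : ContinuousAt (fun x => pushedHeight (f x) (g x)) x :=
  continuousAt_const.min <| continuousAt_const.add <|
    (continuousAt_const.mul (hg.add continuousAt_const)).div (hf.add continuousAt_const)
      (by contrapose! hx; linarith)

theorem ContinuousAt.horizontalScale (hf : ContinuousAt f x) (hg : ContinuousAt g x)
    (hx : f x ≠ -1) (hgx : g x ^ 2 ≠ 1) : ContinuousAt (fun x => horizontalScale (f x) (g x)) x :=
  Real.continuous_sqrt.continuousAt.comp <|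
    (continuousAt_const.sub ((hf.pushedHeight hg hx).pow 2)).div
      (continuousAt_const.sub (hg.pow 2)) (sub_ne_zero.2 hgx.symm)

end continuity

section sphere

variable {E : Type*} [NormedAddCommGroup E] [InnerProductSpace ℝ E] {e : E}

theorem continuous_heightPush (he : ‖e‖ = 1) :
    Continuous fun p : Icc (0 : ℝ) 1 × sphere (0 : E) 1 => heightPush e p.1 p.2 := by
  have hr : Continuous fun p : Icc (0 : ℝ) 1 × sphere (0 : E) 1 => (p.1 : ℝ) := by fun_prop
  have hy : Continuous fun p : Icc (0 : ℝ) 1 × sphere (0 : E) 1 => (p.2 : E) := by fun_prop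
  have hs := continuous_const.inner hy (𝕜 := ℝ) (f := fun _ => e)
  have hr₁ (p : Icc (0 : ℝ) 1 × sphere (0 : E) 1) : (p.1 : ℝ) ≠ -1 := by
    linarith [p.1.2.1]
  have ht : Continuous fun p : Icc (0 : ℝ) 1 × sphere (0 : E) 1 => pushedHeight p.1 ⟪e, p.2⟫ :=
    continuous_iff_continuousAt.2 fun p => hr.continuousAt.pushedHeight hs.continuousAt (hr₁ p)
  refine .add ?_ (ht.smul continuous_const)
  refine continuous_smul_of_continuousAt_of_norm_le (hy.sub (hs.smul continuous_const))
    (fun p hp => hr.continuousAt.horizontalScale hs.continuousAt (hr₁ p) ?_) (C := √2)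
    (fun p => ?_)
  · exact fun hs => hp (sub_inner_smul_eq_zero he (norm_eq_of_mem_sphere p.2) hs)
  · rw [Real.norm_eq_abs, abs_of_nonneg horizontalScale_nonneg]
    exact horizontalScale_le p.1.2.1 p.1.2.2 (abs_inner_le_one he (norm_eq_of_mem_sphere p.2))

def heightPushSphere (he : ‖e‖ = 1) (r : Icc (0 : ℝ) 1) :
    C(sphere (0 : E) 1, sphere (0 : E) 1) where
  toFun y := ⟨heightPush e r y, mem_sphere_zero_iff_norm.2 <|
    norm_heightPush r.2.1 r.2.2 he (norm_eq_of_mem_sphere y)⟩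
  continuous_toFun := ((continuous_heightPush he).comp (Continuous.prodMk_right r)).subtype_mk _

theorem continuous_heightPushSphere (he : ‖e‖ = 1) :
    Continuous fun p : Icc (0 : ℝ) 1 × sphere (0 : E) 1 => heightPushSphere he p.1 p.2 :=
  (continuous_heightPush he).subtype_mk _

theorem heightPushSphere_one (he : ‖e‖ = 1) : heightPushSphere he 1 = ContinuousMap.id _ :=
  ContinuousMap.ext fun y => Subtype.ext (heightPush_one_left he (norm_eq_of_mem_sphere y))

theorem heightPushSphere_homotopic_id (he : ‖e‖ = 1) (r : Icc (0 : ℝ) 1) :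
    (heightPushSphere he r).Homotopic (ContinuousMap.id _) := by
  have : PathConnectedSpace (Icc (0 : ℝ) 1) := isPathConnected_iff_pathConnectedSpace.1 <|
    (convex_Icc 0 1).isPathConnected (nonempty_Icc.2 zero_le_one)
  exact heightPushSphere_one he ▸
    ContinuousMap.homotopic_of_continuous_uncurry _ (continuous_heightPushSphere he) r 1

end sphere

/-- writing points of `S^{j−1} ⊆ ℝ^{j−1} × ℝ` as `(x, s)` with height
`s` (here `j − 1 = d`, the height being the last coordinate), there is a family
`(f_r)_{r ∈ [0,1]}` of well-defined continuous self-maps of the sphere with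
`f_r(x, s) = (u·x, min(1, −1 + 2(s+1)/(r+1)))` for some `u = u_r(x,s) ≥ 0` making the
image lie on the sphere; each `f_r` has degree `1` (i.e. is homotopic to the identity),
maps every point of height `s ≥ r` to the north pole, and `(r, y) ↦ f_r(y)` is jointly
continuous. -/
theorem height_pushing_family {d : ℕ} :
    ∃ F : Set.Icc (0 : ℝ) 1 →
        C(Metric.sphere (0 : Euc (d + 1)) 1, Metric.sphere (0 : Euc (d + 1)) 1),
      (∀ (r : Set.Icc (0 : ℝ) 1) (y : Metric.sphere (0 : Euc (d + 1)) 1),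
        (F r y : Euc (d + 1)) (Fin.last d)
            = min 1 (-1 + 2 * ((y : Euc (d + 1)) (Fin.last d) + 1) / ((r : ℝ) + 1)) ∧
        ∃ u : ℝ, 0 ≤ u ∧ ∀ i : Fin d,
          (F r y : Euc (d + 1)) i.castSucc = u * (y : Euc (d + 1)) i.castSucc) ∧
      (∀ r : Set.Icc (0 : ℝ) 1, (F r).Homotopic (ContinuousMap.id _)) ∧
      (∀ (r : Set.Icc (0 : ℝ) 1) (y : Metric.sphere (0 : Euc (d + 1)) 1),
        (r : ℝ) ≤ (y : Euc (d + 1)) (Fin.last d) →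
          (F r y : Euc (d + 1)) = EuclideanSpace.single (Fin.last d) (1 : ℝ)) ∧
      Continuous (fun p : Set.Icc (0 : ℝ) 1 × Metric.sphere (0 : Euc (d + 1)) 1 =>
        F p.1 p.2) := by
  set e : Euc (d + 1) := EuclideanSpace.single (Fin.last d) 1
  have he : ‖e‖ = 1 := by simp [e]
  have height (v : Euc (d + 1)) : v (Fin.last d) = ⟪e, v⟫ := by
    simp [e, EuclideanSpace.inner_single_left]
  refine ⟨heightPushSphere he,
    fun r y => ⟨?_, horizontalScale r ⟪e, y⟫, horizontalScale_nonneg, fun i => ?_⟩,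
    heightPushSphere_homotopic_id he, fun r y hr => heightPush_of_le r.2.1 (height y ▸ hr),
    continuous_heightPushSphere he⟩
  · rw [height, height]
    exact inner_heightPush he r y
  · simp [heightPushSphere, heightPush, e, (Fin.castSucc_lt_last i).ne]
end
end
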